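/- arXiv:2102.03091 — 3 statements merged into one kernel-verified Lean document; each statement's English description precedes it below -/
import Mathlib

section
/- Let d, M, N, K ∈ ℕ with K ≥ 1. Suppose (W, Y) ∈ 𝒰 with W = (w₁,…,w_K) ∈ ℝ₊^K, Y = (X¹,…,X^K) ∈ ((ℝ^d)^M)^K, where 𝒰 is defined by the constraints Σ_k w_k = 1, Σ_k w_k ϑ(X^k) ≤ A, and Σ_k w_k φ_n(X^k) = μ_n for 1 ≤ n ≤ N. Then there exist a subset J ⊆ {1,…,K} with #J ≤ N+3 and nonnegative weights (w̃_j)_{j∈J} such that, setting w̃_j = 0 for j ∉ J, the pair (W̃, Y) still belongs to 𝒰 and moreover Σ_j w̃_j c(X^j) = Σ_k w_k c(X^k) and Σ_j w̃_j ϑ(X^j) = Σ_k w_k ϑ(X^k). -/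
open Finset

/-- Sparsification of a feasible discrete MCOT measure: any feasible pair
`(W, Y) ∈ 𝒰_K^N` can be replaced by weights supported on at most `N+3` of the
same atoms, preserving the moment constraints, the total mass, the cost and the
`ϑ`-moment. -/
theorem mcot_sparsification (d M N K : ℕ) (hK : 1 ≤ K)
    (c ϑ : (Fin M → Fin d → ℝ) → ℝ)
    (hc : ∀ X, 0 ≤ c X) (hϑ : ∀ X, 0 ≤ ϑ X)
    (φ : Fin N → (Fin M → Fin d → ℝ) → ℝ) (μm : Fin N → ℝ)
    (A : ℝ) (hA : 0 < A)
    (W : Fin K → ℝ) (X : Fin K → Fin M → Fin d → ℝ)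
    (hW : ∀ k, 0 ≤ W k) (hsum : ∑ k, W k = 1)
    (hθA : ∑ k, W k * ϑ (X k) ≤ A)
    (hmom : ∀ n, ∑ k, W k * φ n (X k) = μm n) :
    ∃ (J : Finset (Fin K)) (W' : Fin K → ℝ),
      J.card ≤ N + 3 ∧
      (∀ k, 0 ≤ W' k) ∧ (∀ k ∉ J, W' k = 0) ∧
      (∑ k, W' k = 1) ∧
      (∀ n, ∑ k, W' k * φ n (X k) = μm n) ∧
      (∑ k, W' k * ϑ (X k) ≤ A) ∧
      (∑ k, W' k * c (X k) = ∑ k, W k * c (X k)) ∧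
      (∑ k, W' k * ϑ (X k) = ∑ k, W k * ϑ (X k)) := by
  classical
  -- the embedding into `ℝ^{N+2}`
  set p : Fin K → (Fin N → ℝ) × ℝ × ℝ :=
    fun k => (fun n => φ n (X k), c (X k), ϑ (X k)) with hp
  set tgt : (Fin N → ℝ) × ℝ × ℝ := ∑ k, W k • p k with htgt
  have htgt_mem : tgt ∈ convexHull ℝ (Set.range p) := by
    have := Finset.centerMass_mem_convexHull (Finset.univ : Finset (Fin K))
      (w := W) (z := p) (fun i _ => hW i) (by rw [hsum]; norm_num)
      (fun i _ => Set.mem_range_self i)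
    simpa [Finset.centerMass, hsum, htgt] using this
  obtain ⟨ι, hι, z, w, hzs, hai, hw0, hw1, hwz⟩ :=
    eq_pos_convex_span_of_mem_convexHull htgt_mem
  -- pick preimages
  have hpre : ∀ i : ι, ∃ k : Fin K, p k = z i := fun i => hzs (Set.mem_range_self i)
  choose f hf using hpre
  have hfinj : Function.Injective f := by
    intro i j hij
    exact hai.injective (by rw [← hf i, ← hf j, hij])
  set J : Finset (Fin K) := Finset.univ.image f with hJ
  set W' : Fin K → ℝ := fun k => ∑ i ∈ Finset.univ.filter (fun i => f i = k), w i with hW'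
  have hfiber : ∀ (a : Fin K → ℝ),
      ∑ k, W' k * a k = ∑ i, w i * a (f i) := by
    intro a
    calc ∑ k, W' k * a k
        = ∑ k, ∑ i ∈ Finset.univ.filter (fun i => f i = k), w i * a (f i) := by
          refine Finset.sum_congr rfl fun k _ => ?_
          rw [hW', Finset.sum_mul]
          exact Finset.sum_congr rfl fun i hi => by
            rw [(Finset.mem_filter.1 hi).2]
      _ = ∑ i, w i * a (f i) :=
          Finset.sum_fiberwise_of_maps_to (fun i _ => Finset.mem_univ (f i)) _
  -- components of the preserved vector sum
  have hvec : ∑ i, w i • z i = tgt := hwz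
  have hcomp : ∀ (g : ((Fin N → ℝ) × ℝ × ℝ) →ₗ[ℝ] ℝ),
      ∑ i, w i * g (z i) = ∑ k, W k * g (p k) := by
    intro g
    have h1 : g (∑ i, w i • z i) = g tgt := by rw [hvec]
    simpa [map_sum, htgt, smul_eq_mul] using h1
  have key : ∀ (a : Fin K → ℝ) (g : ((Fin N → ℝ) × ℝ × ℝ) →ₗ[ℝ] ℝ),
      (∀ k, g (p k) = a k) → ∑ k, W' k * a k = ∑ k, W k * a k := by
    intro a g hg
    rw [hfiber a]
    have : ∑ i, w i * a (f i) = ∑ i, w i * g (z i) := by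
      refine Finset.sum_congr rfl fun i _ => ?_
      rw [← hf i, hg (f i)]
    rw [this, hcomp g]
    exact Finset.sum_congr rfl fun k _ => by rw [hg k]
  have hφeq : ∀ n, ∑ k, W' k * φ n (X k) = ∑ k, W k * φ n (X k) := fun n =>
    key (fun k => φ n (X k))
      ((LinearMap.proj n).comp (LinearMap.fst ℝ (Fin N → ℝ) (ℝ × ℝ)))
      (fun k => rfl)
  have hceq : ∑ k, W' k * c (X k) = ∑ k, W k * c (X k) :=
    key (fun k => c (X k))
      ((LinearMap.fst ℝ ℝ ℝ).comp (LinearMap.snd ℝ (Fin N → ℝ) (ℝ × ℝ)))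
      (fun k => rfl)
  have hθeq : ∑ k, W' k * ϑ (X k) = ∑ k, W k * ϑ (X k) :=
    key (fun k => ϑ (X k))
      ((LinearMap.snd ℝ ℝ ℝ).comp (LinearMap.snd ℝ (Fin N → ℝ) (ℝ × ℝ)))
      (fun k => rfl)
  have hsum' : ∑ k, W' k = 1 := by
    have := hfiber (fun _ => 1)
    simpa [hw1] using this
  -- cardinality bound
  have hcard : J.card ≤ N + 3 := by
    have h1 : J.card ≤ Fintype.card ι := by
      rw [hJ]
      exact (Finset.card_image_le).trans (by simp)
    have h2 : Fintype.card ι ≤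
        Module.finrank ℝ (vectorSpan ℝ (Set.range z)) + 1 :=
      hai.card_le_finrank_succ
    have h3 : Module.finrank ℝ (vectorSpan ℝ (Set.range z)) ≤
        Module.finrank ℝ ((Fin N → ℝ) × ℝ × ℝ) := Submodule.finrank_le _
    have h4 : Module.finrank ℝ ((Fin N → ℝ) × ℝ × ℝ) = N + 2 := by
      simp [Module.finrank_prod]
    omega
  refine ⟨J, W', hcard, ?_, ?_, hsum', ?_, ?_, hceq, hθeq⟩
  · intro k
    exact Finset.sum_nonneg fun i _ => (hw0 i).le
  · intro k hk
    rw [hW']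
    apply Finset.sum_eq_zero
    intro i hi
    have hfi : f i = k := (Finset.mem_filter.1 hi).2
    have : k ∈ J := hJ ▸ hfi ▸ Finset.mem_image_of_mem f (Finset.mem_univ i)
    exact absurd this hk
  · intro n; rw [hφeq n, hmom n]
  · rw [hθeq]; exact hθA
end

section
/- Let d, M, N, K ∈ ℕ with K ≥ 2N + 6. For any two elements (W₀, Y₀) and (W₁, Y₁) of the constraint set 𝒰_K^N (discrete measures with K atoms satisfying the N moment constraints, the normalization constraint, and the inequality constraint Σ_k w_k ϑ(X^k) ≤ A), there exists a continuous piecewise-linear map ψ : [0,1] → 𝒰_K^N with ψ(0) = (W₀, Y₀), ψ(1) = (W₁, Y₁), such that t ↦ ℐ(ψ(t)) is monotone, where ℐ(W,Y) = Σ_{k=1}^K w_k c(X^k). -/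
/-!
Two kinds of segments keep a configuration `(w, X)` feasible: segments with fixed positions, along
which the constraints are convex in the weights and the cost is affine, and segments that only move
atoms of zero weight, along which all moments are constant. Carathéodory's argument for the `N + 2`
test functions `1, c, φ₁, …, φ_N`, with the kernel direction oriented so that the `ϑ`-moment does
not increase, joins each configuration by cost-preserving segments to one with at most `N + 2`
atoms of positive weight. Since `K - (N + 2) > N + 2`, the atoms of the second configuration can
be moved one at a time (copy the position into an empty slot, then shift the weight) off the
support of the first; giving every empty slot the position used by the other configuration, both
end up with the same positions and are joined by one segment of affine cost. The cost is thus
constant on every segment of the chain except that one, so it is monotone along the polygonal path.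
-/

open Finset Set Relation

namespace MonotonePath

section PolygonalPath

variable {E : Type*} [AddCommGroup E] [Module ℝ E]

/-- The polygonal path through `g 0, …, g L`, running along `[g j, g (j + 1)]` for
`t ∈ [j / L, (j + 1) / L]`. -/
noncomputable def polygonalPath (L : ℕ) (g : ℕ → E) (t : ℝ) : E :=
  g 0 + ∑ j ∈ range L, (projIcc (0 : ℝ) 1 zero_le_one (t * L - j) : ℝ) • (g (j + 1) - g j)

def IsPolygonal (ψ : ℝ → E) : Prop :=
  ∃ (L : ℕ) (τ : Fin (L + 1) → ℝ), Monotone τ ∧ τ 0 = 0 ∧ τ (Fin.last L) = 1 ∧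
    ∀ i : Fin L, ∀ s ∈ Icc (0 : ℝ) 1,
      ψ ((1 - s) * τ i.castSucc + s * τ i.succ) = (1 - s) • ψ (τ i.castSucc) + s • ψ (τ i.succ)

variable {L j : ℕ} {s t : ℝ}

theorem polygonalPath_div (g : ℕ → E) (hj : j < L) (hs : s ∈ Icc (0 : ℝ) 1) :
    polygonalPath L g ((j + s) / L) = (1 - s) • g j + s • g (j + 1) := by
  have hL : (L : ℝ) ≠ 0 := Nat.cast_ne_zero.2 (by omega)
  have h_before : ∀ k ∈ range j,
      (projIcc (0 : ℝ) 1 zero_le_one (j + s - k) : ℝ) • (g (k + 1) - g k) = g (k + 1) - g k := by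
    intro k hk
    have : (k : ℝ) + 1 ≤ j := by exact_mod_cast mem_range.1 hk
    rw [projIcc_of_right_le _ (by linarith [hs.1]), one_smul]
  have h_after : ∀ k ∈ Finset.Ico (j + 1) L,
      (projIcc (0 : ℝ) 1 zero_le_one (j + s - k) : ℝ) • (g (k + 1) - g k) = 0 := by
    intro k hk
    have : (j : ℝ) + 1 ≤ k := by exact_mod_cast (Finset.mem_Ico.1 hk).1
    rw [projIcc_of_le_left _ (by linarith [hs.2]), zero_smul]
  rw [polygonalPath, div_mul_cancel₀ _ hL, ← sum_range_add_sum_Ico _ (show j + 1 ≤ L by omega),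
    sum_range_succ, sum_congr rfl h_before, sum_congr rfl h_after, sum_range_sub,
    add_sub_cancel_left, projIcc_of_mem _ hs, sum_const_zero]
  module

theorem exists_eq_div (hL : 0 < L) (ht : t ∈ Icc (0 : ℝ) 1) :
    ∃ j < L, ∃ s ∈ Icc (0 : ℝ) 1, t = (j + s) / L := by
  have hL' : (0 : ℝ) < L := by exact_mod_cast hL
  rcases ht.2.eq_or_lt with rfl | ht1
  · refine ⟨L - 1, by omega, 1, right_mem_Icc.2 zero_le_one, ?_⟩
    rw [Nat.cast_pred hL, sub_add_cancel, div_self hL'.ne']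
  · have htL : 0 ≤ t * L := mul_nonneg ht.1 hL'.le
    refine ⟨⌊t * L⌋₊, ?_, t * L - ⌊t * L⌋₊, ⟨sub_nonneg.2 (Nat.floor_le htL), ?_⟩, ?_⟩
    · exact Nat.floor_lt htL |>.2 (by nlinarith)
    · linarith [Nat.lt_floor_add_one (t * L)]
    · field_simp
      ring

theorem polygonalPath_zero (L : ℕ) (g : ℕ → E) : polygonalPath L g 0 = g 0 := by
  refine add_eq_left.2 (sum_eq_zero fun j _ => ?_)
  rw [zero_mul, zero_sub, projIcc_of_le_left _ (by simp), zero_smul]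

theorem polygonalPath_one (g : ℕ → E) (hL : 0 < L) : polygonalPath L g 1 = g L := by
  have h := polygonalPath_div g (L := L) (j := L - 1) (by omega) (right_mem_Icc.2 zero_le_one)
  rwa [Nat.cast_pred hL, sub_add_cancel, div_self (by positivity), Nat.sub_add_cancel hL,
    sub_self, zero_smul, zero_add, one_smul] at h

theorem continuous_polygonalPath [TopologicalSpace E] [ContinuousAdd E] [ContinuousSMul ℝ E]
    (L : ℕ) (g : ℕ → E) : Continuous (polygonalPath L g) :=
  continuous_const.add <| continuous_finsetSum _ fun _ _ =>
    (continuous_subtype_val.comp <| continuous_projIcc.comp <| by fun_prop).smul continuous_const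

theorem isPolygonal_polygonalPath (g : ℕ → E) (hL : 0 < L) : IsPolygonal (polygonalPath L g) := by
  have hL' : (L : ℝ) ≠ 0 := by positivity
  have node : ∀ i < L + 1, polygonalPath L g (i / L) = g i := by
    intro i hi
    rcases Nat.lt_succ_iff_lt_or_eq.1 hi with hi | rfl
    · simpa using polygonalPath_div g hi (left_mem_Icc.2 zero_le_one)
    · rw [div_self hL', polygonalPath_one g hL]
  refine ⟨L, fun i => (i : ℕ) / L, fun i i' h => ?_, by simp, by simp [hL'], fun i s hs => ?_⟩
  · exact div_le_div_of_nonneg_right (by exact_mod_cast h) (Nat.cast_nonneg _)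
  · simp only [Fin.val_castSucc, Fin.val_succ, Nat.cast_succ]
    rw [node i (by omega), ← Nat.cast_succ, node (i + 1) (by omega), ← polygonalPath_div g i.2 hs]
    congr 1
    field_simp
    push_cast
    ring

theorem monotone_polygonalPath {a : ℕ → ℝ} (ha : ∀ j < L, a j ≤ a (j + 1)) :
    Monotone (polygonalPath L a) := by
  intro t t' htt'
  simp only [polygonalPath, smul_eq_mul]
  gcongr with j hj
  · exact sub_nonneg.2 (ha j (mem_range.1 hj))
  · exact monotone_projIcc _ (by gcongr)

theorem antitone_polygonalPath {a : ℕ → ℝ} (ha : ∀ j < L, a (j + 1) ≤ a j) :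
    Antitone (polygonalPath L a) := by
  intro t t' htt'
  simp only [polygonalPath, smul_eq_mul]
  refine add_le_add_right (sum_le_sum fun j hj => ?_) _
  refine mul_le_mul_of_nonpos_right ?_ (sub_nonpos.2 (ha j (mem_range.1 hj)))
  exact (Subtype.mono_coe _).comp (monotone_projIcc _) (by gcongr)

end PolygonalPath

theorem _root_.Relation.TransGen.exists_seq {X : Type*} {r : X → X → Prop} {a b : X}
    (h : TransGen r a b) :
    ∃ n, 0 < n ∧ ∃ g : ℕ → X, g 0 = a ∧ g n = b ∧ ∀ j < n, r (g j) (g (j + 1)) := by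
  induction h with
  | @single b hab => exact ⟨1, one_pos, fun j => if j = 0 then a else b, by simp, by simp,
      fun j hj => by simpa [Nat.lt_one_iff.1 hj] using hab⟩
  | @tail b c _ hbc ih =>
    obtain ⟨n, hn, g, hg0, hgn, hg⟩ := ih
    refine ⟨n + 1, n.succ_pos, fun j => if j ≤ n then g j else c, by simp [hg0], by simp, ?_⟩
    intro j hj
    rcases Nat.lt_succ_iff_lt_or_eq.1 hj with hj | rfl
    · simpa [hj.le, Nat.succ_le_of_lt hj] using hg j hj
    · simpa [hgn] using hbc

section Segments

variable {E : Type*} [AddCommGroup E] [Module ℝ E] (S : Set E) (I : E → ℝ)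

def AffineSegmentIn (p q : E) : Prop :=
  ∀ s ∈ Icc (0 : ℝ) 1,
    (1 - s) • p + s • q ∈ S ∧ I ((1 - s) • p + s • q) = (1 - s) * I p + s * I q

def LevelSegmentIn (p q : E) : Prop :=
  AffineSegmentIn S I p q ∧ I q = I p

variable {S I} {p q : E}

theorem AffineSegmentIn.right_mem (h : AffineSegmentIn S I p q) : q ∈ S := by
  simpa using (h 1 (right_mem_Icc.2 zero_le_one)).1

theorem AffineSegmentIn.symm (h : AffineSegmentIn S I p q) : AffineSegmentIn S I q p := by
  intro s hs
  have h' := h (1 - s) ⟨by linarith [hs.2], by linarith [hs.1]⟩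
  rw [sub_sub_cancel, add_comm] at h'
  exact ⟨h'.1, by rw [h'.2]; ring⟩

instance : Std.Symm (LevelSegmentIn S I) :=
  ⟨fun _ _ h => ⟨h.1.symm, h.2.symm⟩⟩

theorem mem_of_reflTransGen_levelSegmentIn (h : ReflTransGen (LevelSegmentIn S I) p q)
    (hp : p ∈ S) : q ∈ S := by
  induction h with
  | refl => exact hp
  | tail _ hbc _ => exact hbc.1.right_mem

theorem apply_eq_of_reflTransGen_levelSegmentIn (h : ReflTransGen (LevelSegmentIn S I) p q) :
    I q = I p := by
  induction h with
  | refl => rfl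
  | tail _ hbc ih => rw [hbc.2, ih]

variable {L : ℕ} {g : ℕ → E}

theorem polygonalPath_mem (hL : 0 < L) (hg : ∀ j < L, AffineSegmentIn S I (g j) (g (j + 1)))
    {t : ℝ} (ht : t ∈ Icc (0 : ℝ) 1) : polygonalPath L g t ∈ S := by
  obtain ⟨j, hj, s, hs, rfl⟩ := exists_eq_div hL ht
  rw [polygonalPath_div g hj hs]
  exact (hg j hj s hs).1

theorem apply_polygonalPath (hL : 0 < L) (hg : ∀ j < L, AffineSegmentIn S I (g j) (g (j + 1))) :
    EqOn (I ∘ polygonalPath L g) (polygonalPath L (I ∘ g)) (Icc 0 1) := by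
  intro t ht
  obtain ⟨j, hj, s, hs, rfl⟩ := exists_eq_div hL ht
  rw [Function.comp_apply, polygonalPath_div g hj hs, polygonalPath_div _ hj hs]
  exact (hg j hj s hs).2

theorem exists_seq_of_levelSegmentIn {R : ℝ → ℝ → Prop} (hR : ∀ x, R x x) {P₀ P₁ q₀ q₁ : E}
    (h₀ : ReflTransGen (LevelSegmentIn S I) P₀ q₀) (hq : AffineSegmentIn S I q₀ q₁)
    (h₁ : ReflTransGen (LevelSegmentIn S I) P₁ q₁) (hP : R (I P₀) (I P₁)) :
    ∃ L, 0 < L ∧ ∃ g : ℕ → E, g 0 = P₀ ∧ g L = P₁ ∧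
      ∀ j < L, AffineSegmentIn S I (g j) (g (j + 1)) ∧ R (I (g j)) (I (g (j + 1))) := by
  let r p q := AffineSegmentIn S I p q ∧ R (I p) (I q)
  have hlevel : LevelSegmentIn S I ≤ r := fun p q h => ⟨h.1, h.2 ▸ hR _⟩
  have hr : r q₀ q₁ := ⟨hq, by
    rwa [apply_eq_of_reflTransGen_levelSegmentIn h₀, apply_eq_of_reflTransGen_levelSegmentIn h₁]⟩
  exact (TransGen.trans_right (ReflTransGen.mono hlevel _ _ h₀)
    (.head' hr (ReflTransGen.mono hlevel _ _ (symm h₁)))).exists_seq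

theorem exists_polygonal_path_of_seq [TopologicalSpace E] [ContinuousAdd E] [ContinuousSMul ℝ E]
    (hL : 0 < L) (hg : ∀ j < L, AffineSegmentIn S I (g j) (g (j + 1)))
    (hI : Monotone (polygonalPath L (I ∘ g)) ∨ Antitone (polygonalPath L (I ∘ g))) :
    ∃ ψ : ℝ → E, ContinuousOn ψ (Icc 0 1) ∧ ψ 0 = g 0 ∧ ψ 1 = g L ∧
      (∀ t ∈ Icc (0 : ℝ) 1, ψ t ∈ S) ∧ IsPolygonal ψ ∧
      (MonotoneOn (I ∘ ψ) (Icc 0 1) ∨ AntitoneOn (I ∘ ψ) (Icc 0 1)) := by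
  have hI' := (apply_polygonalPath hL hg).symm
  refine ⟨polygonalPath L g, (continuous_polygonalPath L g).continuousOn, polygonalPath_zero L g,
    polygonalPath_one g hL, fun _ => polygonalPath_mem hL hg, isPolygonal_polygonalPath g hL, ?_⟩
  exact hI.imp (fun h => (h.monotoneOn _).congr hI') (fun h => (h.antitoneOn _).congr hI')

theorem exists_monotone_polygonal_path [TopologicalSpace E] [ContinuousAdd E]
    [ContinuousSMul ℝ E] {P₀ P₁ q₀ q₁ : E}
    (h₀ : ReflTransGen (LevelSegmentIn S I) P₀ q₀) (hq : AffineSegmentIn S I q₀ q₁)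
    (h₁ : ReflTransGen (LevelSegmentIn S I) P₁ q₁) :
    ∃ ψ : ℝ → E, ContinuousOn ψ (Icc 0 1) ∧ ψ 0 = P₀ ∧ ψ 1 = P₁ ∧
      (∀ t ∈ Icc (0 : ℝ) 1, ψ t ∈ S) ∧ IsPolygonal ψ ∧
      (MonotoneOn (I ∘ ψ) (Icc 0 1) ∨ AntitoneOn (I ∘ ψ) (Icc 0 1)) := by
  rcases le_total (I P₀) (I P₁) with hle | hge
  · obtain ⟨L, hL, g, rfl, rfl, hg⟩ := exists_seq_of_levelSegmentIn le_refl h₀ hq h₁ hle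
    exact exists_polygonal_path_of_seq hL (fun j hj => (hg j hj).1)
      (.inl (monotone_polygonalPath fun j hj => (hg j hj).2))
  · obtain ⟨L, hL, g, rfl, rfl, hg⟩ :=
      exists_seq_of_levelSegmentIn (R := (· ≥ ·)) le_refl h₀ hq h₁ hge
    exact exists_polygonal_path_of_seq hL (fun j hj => (hg j hj).1)
      (.inr (antitone_polygonalPath fun j hj => (hg j hj).2))

end Segments

section Moments

variable {ι α : Type*} [Fintype ι]

/-- A configuration `p = (w, X)` stands for the discrete measure `∑ k, w k • δ (X k)`, and
`moment p f` is the integral of `f` against it. -/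
def moment (p : (ι → ℝ) × (ι → α)) (f : α → ℝ) : ℝ := ∑ k, p.1 k * f (p.2 k)

theorem moment_one (p : (ι → ℝ) × (ι → α)) : moment p 1 = ∑ k, p.1 k := by
  simp [moment]

theorem moment_add_smul (w V : ι → ℝ) (X : ι → α) (t : ℝ) (f : α → ℝ) :
    moment (w + t • V, X) f = moment (w, X) f + t * moment (V, X) f := by
  simp only [moment, mul_sum, ← sum_add_distrib, Pi.add_apply, Pi.smul_apply, smul_eq_mul]
  exact sum_congr rfl fun _ _ => by ring

theorem moment_neg (V : ι → ℝ) (X : ι → α) (f : α → ℝ) : moment (-V, X) f = -moment (V, X) f := by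
  simp [moment]

theorem moment_single_sub_single [DecidableEq ι] (X : ι → α) (i j : ι) (f : α → ℝ) :
    moment (Pi.single j 1 - Pi.single i 1, X) f = f (X j) - f (X i) := by
  simp [moment, sub_mul, sum_sub_distrib, Pi.single_apply]

theorem exists_moment_relation {τ : Type*} [Fintype τ] (X : ι → α) (f : τ → α → ℝ) (g : α → ℝ)
    (T : Finset ι) (hT : Fintype.card τ < #T) :
    ∃ V : ι → ℝ, V ≠ 0 ∧ (∀ k ∉ T, V k = 0) ∧ (∀ i, moment (V, X) (f i) = 0) ∧
      moment (V, X) g ≤ 0 := by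
  have hdep : ¬LinearIndepOn ℝ (fun k i => f i (X k)) (T : Set ι) := fun h => by
    have := h.fintype_card_le_finrank
    simp only [Finset.coe_sort_coe, Fintype.card_coe, Module.finrank_fintype_fun_eq_card] at this
    omega
  obtain ⟨V, hV, k, hk, hVk⟩ := not_linearIndepOn_finset_iff.1 hdep
  classical
  let V' : ι → ℝ := fun k => if k ∈ T then V k else 0
  have hV' : ∀ h : α → ℝ, moment (V', X) h = ∑ k ∈ T, V k * h (X k) := fun h => by
    simp [moment, V', ite_mul, sum_ite_mem]
  have hV'f : ∀ i, moment (V', X) (f i) = 0 := fun i => by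
    simpa [hV'] using congrFun hV i
  have hV'0 : V' ≠ 0 := fun h => hVk (by simpa [V', hk] using congrFun h k)
  have hV'T : ∀ k ∉ T, V' k = 0 := fun k hk => if_neg hk
  rcases le_total (moment (V', X) g) 0 with hg | hg
  · exact ⟨V', hV'0, hV'T, hV'f, hg⟩
  · exact ⟨-V', neg_ne_zero.2 hV'0, fun k hk => by simp [hV'T k hk],
      fun i => by rw [moment_neg, hV'f, neg_zero], by rw [moment_neg]; linarith⟩

end Moments

section Weights

variable {ι : Type*} [Fintype ι]

noncomputable def weightSupport (w : ι → ℝ) : Finset ι := {k | w k ≠ 0}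

theorem mem_weightSupport {w : ι → ℝ} {k : ι} : k ∈ weightSupport w ↔ w k ≠ 0 := by
  simp [weightSupport]

theorem exists_nonneg_add_smul_ssubset {w V : ι → ℝ} (hw : 0 ≤ w) (hV : ∃ k, V k < 0)
    (hVw : ∀ k, w k = 0 → V k = 0) :
    ∃ t : ℝ, 0 ≤ t ∧ 0 ≤ w + t • V ∧ weightSupport (w + t • V) ⊂ weightSupport w := by
  classical
  obtain ⟨m, hm, hmin⟩ := exists_min_image {k | V k < 0} (fun k => w k / -V k)
    (by simpa [Finset.Nonempty] using hV)
  have hVm : V m < 0 := by simpa using hm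
  set t := w m / -V m
  have ht : 0 ≤ t := div_nonneg (hw m) (by linarith)
  have hwm : w m + t * V m = 0 := by
    simp only [t, div_neg, neg_mul, div_mul_cancel₀ _ hVm.ne, add_neg_cancel]
  have hnonneg : 0 ≤ w + t • V := by
    intro k
    rcases le_or_gt 0 (V k) with hk | hk
    · simpa using add_nonneg (hw k) (mul_nonneg ht hk)
    · have := (le_div_iff₀ (neg_pos.2 hk)).1 (hmin k (by simpa using hk))
      simp only [Pi.add_apply, Pi.smul_apply, smul_eq_mul, Pi.zero_apply]
      linarith
  refine ⟨t, ht, hnonneg, (Finset.ssubset_iff_of_subset fun k => ?_).2 ⟨m, ?_, ?_⟩⟩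
  · simp only [mem_weightSupport, Pi.add_apply, Pi.smul_apply, smul_eq_mul]
    exact mt fun hk => by simp [hk, hVw k hk]
  · exact mem_weightSupport.2 fun h => hVm.ne (hVw m h)
  · simpa [mem_weightSupport] using hwm

theorem weightSupport_add_smul_single_sub_single [DecidableEq ι] {w : ι → ℝ} {i j : ι}
    (hij : i ≠ j) (hi : w i ≠ 0) (hj : w j = 0) :
    weightSupport (w + w i • (Pi.single j 1 - Pi.single i 1)) =
      insert j ((weightSupport w).erase i) := by
  ext k
  rcases eq_or_ne k j with rfl | hkj
  · simp [mem_weightSupport, hij.symm, hj, hi]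
  rcases eq_or_ne k i with rfl | hki
  · simp [mem_weightSupport, hij]
  · simp [mem_weightSupport, hki, hkj]

end Weights

section ConstraintSet

variable {ι α : Type*} [Fintype ι] {N : ℕ} (c ϑ : α → ℝ) (φ : Fin N → α → ℝ) (μ : Fin N → ℝ) (A : ℝ)

def constraintSet : Set ((ι → ℝ) × (ι → α)) :=
  {p | 0 ≤ p.1 ∧ moment p 1 = 1 ∧ moment p ϑ ≤ A ∧ ∀ n, moment p (φ n) = μ n}

local notation "𝒰" => constraintSet ϑ φ μ A

local notation "ℐ" => fun p => moment p c

variable {c ϑ φ μ A} {p q : (ι → ℝ) × (ι → α)}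

theorem mem_constraintSet_of_moment (hp : p ∈ 𝒰) (hq : 0 ≤ q.1) (h₁ : moment q 1 = moment p 1)
    (hϑ : moment q ϑ ≤ moment p ϑ) (hφ : ∀ n, moment q (φ n) = moment p (φ n)) : q ∈ 𝒰 :=
  ⟨hq, h₁.trans hp.2.1, hϑ.trans hp.2.2.1, fun n => (hφ n).trans (hp.2.2.2 n)⟩

variable [AddCommGroup α] [Module ℝ α]

theorem moment_lineMap_of_snd_eq (h : p.2 = q.2) (s : ℝ) (f : α → ℝ) :
    moment ((1 - s) • p + s • q) f = (1 - s) * moment p f + s * moment q f := by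
  simp only [moment, mul_sum, ← sum_add_distrib, Prod.fst_add, Prod.snd_add, Prod.smul_fst,
    Prod.smul_snd, Pi.add_apply, Pi.smul_apply, smul_eq_mul, ← h, ← add_smul, sub_add_cancel,
    one_smul]
  exact sum_congr rfl fun _ _ => by ring

theorem moment_lineMap_of_fst_eq (h₁ : p.1 = q.1) (h₂ : ∀ k, p.1 k ≠ 0 → p.2 k = q.2 k) (s : ℝ)
    (f : α → ℝ) : moment ((1 - s) • p + s • q) f = moment p f := by
  refine sum_congr rfl fun k _ => ?_
  simp only [Prod.fst_add, Prod.snd_add, Prod.smul_fst, Prod.smul_snd, Pi.add_apply,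
    Pi.smul_apply, smul_eq_mul, ← h₁, ← add_mul, sub_add_cancel, one_mul]
  by_cases hk : p.1 k = 0
  · simp [hk]
  · rw [← h₂ k hk, ← add_smul, sub_add_cancel, one_smul]

theorem affineSegmentIn_of_snd_eq (hp : p ∈ 𝒰) (hq : q ∈ 𝒰) (h : p.2 = q.2) :
    AffineSegmentIn 𝒰 ℐ p q := by
  intro s ⟨hs₀, hs₁⟩
  refine ⟨⟨fun k => ?_, ?_, ?_, fun n => ?_⟩, moment_lineMap_of_snd_eq h s c⟩
  · have hpk : 0 ≤ p.1 k := hp.1 k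
    have hqk : 0 ≤ q.1 k := hq.1 k
    simp only [Prod.fst_add, Prod.smul_fst, Pi.add_apply, Pi.smul_apply, smul_eq_mul,
      Pi.zero_apply]
    nlinarith
  · rw [moment_lineMap_of_snd_eq h, hp.2.1, hq.2.1]; ring
  · rw [moment_lineMap_of_snd_eq h]; nlinarith [hp.2.2.1, hq.2.2.1]
  · rw [moment_lineMap_of_snd_eq h, hp.2.2.2, hq.2.2.2]; ring

theorem levelSegmentIn_of_fst_eq (hp : p ∈ 𝒰) (h₁ : p.1 = q.1)
    (h₂ : ∀ k, p.1 k ≠ 0 → p.2 k = q.2 k) : LevelSegmentIn 𝒰 ℐ p q := by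
  have hmom := moment_lineMap_of_fst_eq h₁ h₂
  have hq : ∀ f, moment q f = moment p f := fun f => by simpa using hmom 1 f
  refine ⟨fun s _ => ⟨mem_constraintSet_of_moment hp ?_ (hmom s 1) (hmom s ϑ).le (hmom s <| φ ·),
    ?_⟩, hq c⟩
  · rw [Prod.fst_add, Prod.smul_fst, Prod.smul_fst, ← h₁, ← add_smul, sub_add_cancel, one_smul]
    exact hp.1
  · simp only [hmom, hq]; ring

theorem levelSegmentIn_add_smul (hp : p ∈ 𝒰) {V : ι → ℝ} {t : ℝ} (ht : 0 ≤ t)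
    (hpV : 0 ≤ p.1 + t • V) (h₁ : moment (V, p.2) 1 = 0) (hϑ : moment (V, p.2) ϑ ≤ 0)
    (hφ : ∀ n, moment (V, p.2) (φ n) = 0) (hc : moment (V, p.2) c = 0) :
    LevelSegmentIn 𝒰 ℐ p (p.1 + t • V, p.2) := by
  have hq : ∀ f, moment (p.1 + t • V, p.2) f = moment p f + t * moment (V, p.2) f :=
    moment_add_smul _ _ _ _
  have hqU : (p.1 + t • V, p.2) ∈ 𝒰 :=
    mem_constraintSet_of_moment hp hpV (by simp [hq, h₁]) (by simp [hq]; nlinarith)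
      (by simp [hq, hφ])
  exact ⟨affineSegmentIn_of_snd_eq hp hqU rfl, by simp [hq, hc]⟩

-- Carathéodory step: follow a kernel direction of the test functions `1, c, φ` until an atom
-- loses its weight; its sign is chosen so that the `ϑ`-moment does not grow.
theorem exists_levelSegmentIn_card_lt (hp : p ∈ 𝒰) (hcard : N + 2 < #(weightSupport p.1)) :
    ∃ q, LevelSegmentIn 𝒰 ℐ p q ∧ #(weightSupport q.1) < #(weightSupport p.1) := by
  obtain ⟨V, hV, hVsupp, hVf, hVϑ⟩ := exists_moment_relation p.2
    (Fin.cons 1 (Fin.cons c φ) : Fin (N + 2) → α → ℝ) ϑ (weightSupport p.1) (by simpa using hcard)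
  have hV₁ : moment (V, p.2) 1 = 0 := hVf 0
  have hneg : ∃ k, V k < 0 := by
    by_contra! hpos
    rw [moment_one] at hV₁
    exact hV (funext fun k => (sum_eq_zero_iff_of_nonneg fun k _ => hpos k).1 hV₁ k (mem_univ k))
  obtain ⟨t, ht, hpV, hlt⟩ := exists_nonneg_add_smul_ssubset hp.1 hneg
    fun k hk => hVsupp k (mem_weightSupport.not.2 (not_not.2 hk))
  exact ⟨_, levelSegmentIn_add_smul hp ht hpV hV₁ hVϑ (fun n => hVf n.succ.succ) (hVf 1),
    card_lt_card hlt⟩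

theorem exists_reflTransGen_card_le (hp : p ∈ 𝒰) :
    ∃ q, ReflTransGen (LevelSegmentIn 𝒰 ℐ) p q ∧ #(weightSupport q.1) ≤ N + 2 := by
  induction hn : #(weightSupport p.1) using Nat.strong_induction_on generalizing p with
  | _ n ih =>
    by_cases hcard : n ≤ N + 2
    · exact ⟨p, .refl, hn ▸ hcard⟩
    obtain ⟨q, hpq, hlt⟩ := exists_levelSegmentIn_card_lt hp (by omega)
    obtain ⟨r, hqr, hr⟩ := ih _ (hn ▸ hlt) hpq.1.right_mem rfl
    exact ⟨r, .head hpq hqr, hr⟩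

theorem reflTransGen_move [DecidableEq ι] (hp : p ∈ 𝒰) {i j : ι} (hij : i ≠ j) (hj : p.1 j = 0) :
    ReflTransGen (LevelSegmentIn 𝒰 ℐ) p
      (p.1 + p.1 i • (Pi.single j 1 - Pi.single i 1), Function.update p.2 j (p.2 i)) := by
  have hcopy : LevelSegmentIn 𝒰 ℐ p (p.1, Function.update p.2 j (p.2 i)) :=
    levelSegmentIn_of_fst_eq hp rfl fun k hk =>
      (Function.update_of_ne (by rintro rfl; exact hk hj) _ _).symm
  have hX : ∀ f : α → ℝ,
      moment (Pi.single j 1 - Pi.single i 1, Function.update p.2 j (p.2 i)) f = 0 := fun f => by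
    rw [moment_single_sub_single, Function.update_self, Function.update_of_ne hij, sub_self]
  refine .tail (.single hcopy) (levelSegmentIn_add_smul hcopy.1.right_mem (hp.1 i) (fun k => ?_)
    (hX _) (hX _).le (fun _ => hX _) (hX _))
  rcases eq_or_ne k i with rfl | hki
  · simp [hij]
  · simpa [Pi.single_apply, hki] using add_nonneg (hp.1 k) (by split_ifs; exacts [hp.1 i, le_rfl])

theorem exists_reflTransGen_subset (T : Finset ι) (hp : p ∈ 𝒰) (hT : #(weightSupport p.1) < #T) :
    ∃ q, ReflTransGen (LevelSegmentIn 𝒰 ℐ) p q ∧ weightSupport q.1 ⊆ T := by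
  classical
  induction hn : #(weightSupport p.1 \ T) using Nat.strong_induction_on generalizing p with
  | _ n ih =>
    by_cases hsub : weightSupport p.1 ⊆ T
    · exact ⟨p, .refl, hsub⟩
    obtain ⟨i, hi⟩ := Finset.sdiff_nonempty.2 hsub
    obtain ⟨j, hj⟩ : (T \ weightSupport p.1).Nonempty := by
      rw [← card_pos]
      have := le_card_sdiff (weightSupport p.1) T
      omega
    obtain ⟨hiS, hiT⟩ := mem_sdiff.1 hi
    obtain ⟨hjT, hjS⟩ := mem_sdiff.1 hj
    have hij : i ≠ j := by rintro rfl; exact hiT hjT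
    have hpj : p.1 j = 0 := by simpa [mem_weightSupport] using hjS
    have hmove := reflTransGen_move (c := c) hp hij hpj
    have hsupp := weightSupport_add_smul_single_sub_single hij (mem_weightSupport.1 hiS) hpj
    have hlt : #(insert j ((weightSupport p.1).erase i) \ T) < n := by
      rw [Finset.insert_sdiff_of_mem _ hjT, Finset.erase_sdiff_comm, card_erase_of_mem hi, hn]
      exact Nat.sub_lt (hn ▸ card_pos.2 ⟨i, hi⟩) one_pos
    have hcard : #(insert j ((weightSupport p.1).erase i)) < #T := by
      have := card_insert_le j ((weightSupport p.1).erase i)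
      have := card_erase_of_mem hiS
      have := card_pos.2 ⟨i, hiS⟩
      omega
    rw [← hsupp] at hlt hcard
    obtain ⟨r, hqr, hr⟩ := ih _ hlt (mem_of_reflTransGen_levelSegmentIn hmove hp) hcard rfl
    exact ⟨r, hmove.trans hqr, hr⟩

theorem exists_reflTransGen_common_positions (hcard : 2 * N + 5 ≤ Fintype.card ι)
    {P₀ P₁ : (ι → ℝ) × (ι → α)} (hP₀ : P₀ ∈ 𝒰) (hP₁ : P₁ ∈ 𝒰) :
    ∃ q₀ q₁, ReflTransGen (LevelSegmentIn 𝒰 ℐ) P₀ q₀ ∧ ReflTransGen (LevelSegmentIn 𝒰 ℐ) P₁ q₁ ∧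
      q₀ ∈ 𝒰 ∧ q₁ ∈ 𝒰 ∧ q₀.2 = q₁.2 := by
  classical
  obtain ⟨p₀, h₀, hcard₀⟩ := exists_reflTransGen_card_le hP₀
  obtain ⟨p₁, h₁, hcard₁⟩ := exists_reflTransGen_card_le hP₁
  have hp₀ := mem_of_reflTransGen_levelSegmentIn h₀ hP₀
  obtain ⟨p₂, h₂, hsub⟩ := exists_reflTransGen_subset (weightSupport p₀.1)ᶜ
    (mem_of_reflTransGen_levelSegmentIn h₁ hP₁) (by rw [card_compl]; omega)
  have hp₂ := mem_of_reflTransGen_levelSegmentIn h₂ (mem_of_reflTransGen_levelSegmentIn h₁ hP₁)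
  let X := (weightSupport p₀.1).piecewise p₀.2 p₂.2
  have hq₀ : LevelSegmentIn 𝒰 ℐ p₀ (p₀.1, X) := levelSegmentIn_of_fst_eq hp₀ rfl fun k hk =>
    (Finset.piecewise_eq_of_mem _ _ _ (mem_weightSupport.2 hk)).symm
  have hq₁ : LevelSegmentIn 𝒰 ℐ p₂ (p₂.1, X) := levelSegmentIn_of_fst_eq hp₂ rfl fun k hk =>
    (Finset.piecewise_eq_of_notMem _ _ _ (mem_compl.1 (hsub (mem_weightSupport.2 hk)))).symm
  exact ⟨_, _, h₀.tail hq₀, (h₁.trans h₂).tail hq₁, hq₀.1.right_mem, hq₁.1.right_mem, rfl⟩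

end ConstraintSet

end MonotonePath

theorem mcot_monotone_path_general (d M N K : ℕ) (hK : 2 * N + 6 ≤ K)
    (c ϑ : (Fin M → Fin d → ℝ) → ℝ)
    (φ : Fin N → (Fin M → Fin d → ℝ) → ℝ) (μm : Fin N → ℝ)
    (A : ℝ)
    (U : Set ((Fin K → ℝ) × (Fin K → Fin M → Fin d → ℝ)))
    (hU : U = {p | (∀ k, 0 ≤ p.1 k) ∧ (∑ k, p.1 k = 1) ∧
      (∑ k, p.1 k * ϑ (p.2 k) ≤ A) ∧ ∀ n, ∑ k, p.1 k * φ n (p.2 k) = μm n})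
    (I : ((Fin K → ℝ) × (Fin K → Fin M → Fin d → ℝ)) → ℝ)
    (hI : I = fun p => ∑ k, p.1 k * c (p.2 k))
    (P₀ P₁ : (Fin K → ℝ) × (Fin K → Fin M → Fin d → ℝ))
    (h₀ : P₀ ∈ U) (h₁ : P₁ ∈ U) :
    ∃ ψ : ℝ → (Fin K → ℝ) × (Fin K → Fin M → Fin d → ℝ),
      ContinuousOn ψ (Set.Icc 0 1) ∧
      ψ 0 = P₀ ∧ ψ 1 = P₁ ∧
      (∀ t ∈ Set.Icc (0:ℝ) 1, ψ t ∈ U) ∧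
      -- ψ is a polygonal chain
      (∃ (L : ℕ) (τ : Fin (L + 1) → ℝ), Monotone τ ∧ τ 0 = 0 ∧ τ (Fin.last L) = 1 ∧
        ∀ i : Fin L, ∀ s ∈ Set.Icc (0:ℝ) 1,
          ψ ((1 - s) * τ i.castSucc + s * τ i.succ)
            = (1 - s) • ψ (τ i.castSucc) + s • ψ (τ i.succ)) ∧
      (MonotoneOn (fun t => I (ψ t)) (Set.Icc 0 1) ∨
        AntitoneOn (fun t => I (ψ t)) (Set.Icc 0 1)) := by
  obtain rfl : U = MonotonePath.constraintSet ϑ φ μm A := by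
    ext p
    simp only [hU, MonotonePath.constraintSet, Set.mem_ofPred_eq, MonotonePath.moment_one]
    rfl
  obtain rfl : I = (MonotonePath.moment · c) := hI
  obtain ⟨q₀, q₁, hq₀, hq₁, hmem₀, hmem₁, hX⟩ :=
    MonotonePath.exists_reflTransGen_common_positions (by rw [Fintype.card_fin]; omega) h₀ h₁
  exact MonotonePath.exists_monotone_polygonal_path hq₀
    (MonotonePath.affineSegmentIn_of_snd_eq hmem₀ hmem₁ hX) hq₁

/-- Theorem 2.3 (monotone polygonal path): if `K ≥ 2N + 6`, any two elements of
the constraint set `𝒰_K^N` can be joined by a continuous polygonal path inside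
`𝒰_K^N` along which the cost `ℐ(W,Y) = Σ_k w_k c(X^k)` is monotone. -/
theorem mcot_monotone_path (d M N K : ℕ) (hK : 2 * N + 6 ≤ K)
    (c ϑ : (Fin M → Fin d → ℝ) → ℝ)
    (hc : ∀ X, 0 ≤ c X) (hϑ : ∀ X, 0 ≤ ϑ X)
    (φ : Fin N → (Fin M → Fin d → ℝ) → ℝ) (μm : Fin N → ℝ)
    (A : ℝ) (hA : 0 < A)
    (U : Set ((Fin K → ℝ) × (Fin K → Fin M → Fin d → ℝ)))
    (hU : U = {p | (∀ k, 0 ≤ p.1 k) ∧ (∑ k, p.1 k = 1) ∧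
      (∑ k, p.1 k * ϑ (p.2 k) ≤ A) ∧ ∀ n, ∑ k, p.1 k * φ n (p.2 k) = μm n})
    (I : ((Fin K → ℝ) × (Fin K → Fin M → Fin d → ℝ)) → ℝ)
    (hI : I = fun p => ∑ k, p.1 k * c (p.2 k))
    (P₀ P₁ : (Fin K → ℝ) × (Fin K → Fin M → Fin d → ℝ))
    (h₀ : P₀ ∈ U) (h₁ : P₁ ∈ U) :
    ∃ ψ : ℝ → (Fin K → ℝ) × (Fin K → Fin M → Fin d → ℝ),
      ContinuousOn ψ (Set.Icc 0 1) ∧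
      ψ 0 = P₀ ∧ ψ 1 = P₁ ∧
      (∀ t ∈ Set.Icc (0:ℝ) 1, ψ t ∈ U) ∧
      -- ψ is a polygonal chain
      (∃ (L : ℕ) (τ : Fin (L + 1) → ℝ), Monotone τ ∧ τ 0 = 0 ∧ τ (Fin.last L) = 1 ∧
        ∀ i : Fin L, ∀ s ∈ Set.Icc (0:ℝ) 1,
          ψ ((1 - s) * τ i.castSucc + s * τ i.succ)
            = (1 - s) • ψ (τ i.castSucc) + s • ψ (τ i.succ)) ∧
      (MonotoneOn (fun t => I (ψ t)) (Set.Icc 0 1) ∨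
        AntitoneOn (fun t => I (ψ t)) (Set.Icc 0 1)) :=
  mcot_monotone_path_general d M N K hK c ϑ φ μm A U hU I hI P₀ P₁ h₀ h₁
end

section
/- Let (W, Y) ∈ 𝒰_K^N be such that some weight w_{k'} = 0. Then for every permutation σ of {1,…,K}, there exists a continuous polygonal map ψ : [0,1] → 𝒰_K^N with ψ(0) = (W, Y), ψ(1) = (W^σ, Y^σ), and t ↦ ℐ(ψ(t)) constant, where W^σ = (w_{σ(k)})_k and Y^σ = (X^{σ(k)})_k. -/
/-!
A configuration `(W, Y)` encodes the discrete measure `∑ k, W k • δ (Y k)`, and every constraint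
defining `𝒰_K^N`, as well as the cost, is an integral against this measure. Two kinds of
segments leave the measure unchanged: moving a point of weight zero, and shifting weight between
two points at the same position. With a weightless point at hand, three such segments swap any
point with the weightless one; three such swaps give any transposition, and transpositions
generate all permutations.
-/

open Set Function

section Polygon

variable {E : Type*} [AddCommGroup E] [Module ℝ E]

variable (S : Set E) in
abbrev PolygonallyJoinedIn : E → E → Prop :=
  Relation.ReflTransGen fun x y => segment ℝ x y ⊆ S

theorem PolygonallyJoinedIn.exists_chain {S : Set E} {p q : E} (h : PolygonallyJoinedIn S p q)
    (hp : p ∈ S) :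
    ∃ (L : ℕ) (f : ℕ → E), f 0 = p ∧ f (L + 1) = q ∧
      ∀ i ≤ L, segment ℝ (f i) (f (i + 1)) ⊆ S := by
  induction h using Relation.ReflTransGen.head_induction_on with
  | refl => exact ⟨0, fun _ => q, rfl, rfl, fun _ _ => by simpa [segment_same]⟩
  | @head a b hab _ ih =>
    obtain ⟨L, f, hf0, hfL, hf⟩ := ih (hab (right_mem_segment ℝ _ _))
    refine ⟨L + 1, fun | 0 => a | i + 1 => f i, rfl, hfL, fun i hi => ?_⟩
    cases i with
    | zero => simpa [hf0] using hab
    | succ i => exact hf i (by omega)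

noncomputable def polygon (f : ℕ → E) (n : ℕ) (u : ℝ) : E :=
  f 0 + ∑ i ∈ Finset.range n, (projIcc (0 : ℝ) 1 zero_le_one (u - i) : ℝ) • (f (i + 1) - f i)

theorem continuous_polygon [TopologicalSpace E] [IsTopologicalAddGroup E] [ContinuousSMul ℝ E]
    (f : ℕ → E) (n : ℕ) : Continuous (polygon f n) := by
  unfold polygon
  fun_prop

theorem polygon_nat_add (f : ℕ → E) {n j : ℕ} (hj : j < n) {s : ℝ} (hs : s ∈ Icc (0 : ℝ) 1) :
    polygon f n (j + s) = AffineMap.lineMap (f j) (f (j + 1)) s := by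
  have hbefore : ∀ i ∈ Finset.range j,
      (projIcc (0 : ℝ) 1 zero_le_one (j + s - i) : ℝ) • (f (i + 1) - f i) = f (i + 1) - f i := by
    intro i hi
    have : (i : ℝ) + 1 ≤ j := by exact_mod_cast Finset.mem_range.mp hi
    rw [projIcc_of_right_le _ (by linarith [hs.1]), one_smul]
  have hafter : ∀ i ∈ Finset.Ico (j + 1) n,
      (projIcc (0 : ℝ) 1 zero_le_one (j + s - i) : ℝ) • (f (i + 1) - f i) = 0 := by
    intro i hi
    have : (j : ℝ) + 1 ≤ i := by exact_mod_cast (Finset.mem_Ico.mp hi).1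
    rw [projIcc_of_le_left _ (by linarith [hs.2]), zero_smul]
  rw [polygon, ← Finset.sum_range_add_sum_Ico _ hj, Finset.sum_eq_zero hafter,
    Finset.sum_range_succ, Finset.sum_congr rfl hbefore, Finset.sum_range_sub, add_sub_cancel_left,
    projIcc_of_mem _ hs, AffineMap.lineMap_apply_module]
  simp only [smul_sub, sub_smul, one_smul]
  abel

theorem exists_nat_add_of_mem_Icc {L : ℕ} {u : ℝ} (hu : u ∈ Icc (0 : ℝ) (L + 1)) :
    ∃ j ≤ L, ∃ s ∈ Icc (0 : ℝ) 1, u = j + s := by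
  refine ⟨min ⌊u⌋₊ L, min_le_right _ _, u - min ⌊u⌋₊ L, ⟨?_, ?_⟩, by ring⟩
  · have : ((min ⌊u⌋₊ L : ℕ) : ℝ) ≤ ⌊u⌋₊ := by exact_mod_cast min_le_left _ _
    linarith [Nat.floor_le hu.1]
  · rcases le_total ⌊u⌋₊ L with h | h
    · rw [min_eq_left h]
      linarith [Nat.lt_floor_add_one u]
    · rw [min_eq_right h]
      linarith [hu.2]

theorem PolygonallyJoinedIn.exists_polygonal_path [TopologicalSpace E] [IsTopologicalAddGroup E]
    [ContinuousSMul ℝ E] {S : Set E} {p q : E} (h : PolygonallyJoinedIn S p q) (hp : p ∈ S) :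
    ∃ ψ : ℝ → E, Continuous ψ ∧ ψ 0 = p ∧ ψ 1 = q ∧ (∀ t ∈ Icc (0 : ℝ) 1, ψ t ∈ S) ∧
      ∃ (L : ℕ) (τ : Fin (L + 1) → ℝ), Monotone τ ∧ τ 0 = 0 ∧ τ (Fin.last L) = 1 ∧
        ∀ i : Fin L, ∀ s ∈ Icc (0 : ℝ) 1,
          ψ ((1 - s) * τ i.castSucc + s * τ i.succ)
            = (1 - s) • ψ (τ i.castSucc) + s • ψ (τ i.succ) := by
  obtain ⟨L, f, hf0, hfL, hf⟩ := h.exists_chain hp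
  set n : ℝ := L + 1
  have hn : 0 < n := by positivity
  set ψ : ℝ → E := fun t => polygon f (L + 1) (n * t)
  have hψ : ∀ j ≤ L, ∀ s ∈ Icc (0 : ℝ) 1,
      ψ ((j + s) / n) = AffineMap.lineMap (f j) (f (j + 1)) s := fun j hj s hs => by
    simp only [ψ, mul_div_cancel₀ _ hn.ne']
    exact polygon_nat_add f (Nat.lt_succ_of_le hj) hs
  have hnode : ∀ j ≤ L, ψ (j / n) = f j := fun j hj => by
    simpa using hψ j hj 0 (left_mem_Icc.2 zero_le_one)
  have hnode_succ : ∀ j ≤ L, ψ ((j + 1 : ℕ) / n) = f (j + 1) := fun j hj => by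
    simpa using hψ j hj 1 (right_mem_Icc.2 zero_le_one)
  refine ⟨ψ, (continuous_polygon f _).comp (continuous_const_mul n), ?_, ?_, fun t ht => ?_,
    L + 1, fun i => (i : ℕ) / n, fun i j hij => ?_, by simp, ?_, fun i s hs => ?_⟩
  · simpa [hf0] using hnode 0 (Nat.zero_le L)
  · rw [← hfL, ← hnode_succ L le_rfl, Nat.cast_succ, div_self hn.ne']
  · obtain ⟨j, hj, s, hs, hts⟩ :=
      exists_nat_add_of_mem_Icc (u := n * t) ⟨by nlinarith [ht.1], by nlinarith [ht.2]⟩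
    have ht_eq : t = (j + s) / n := by rw [← hts]; field_simp
    rw [ht_eq, hψ j hj s hs]
    exact hf j hj (segment_eq_image_lineMap ℝ (f j) (f (j + 1)) ▸ mem_image_of_mem _ hs)
  · exact div_le_div_of_nonneg_right (by exact_mod_cast hij) hn.le
  · show ((L + 1 : ℕ) : ℝ) / n = 1
    rw [Nat.cast_succ, div_self hn.ne']
  · have harg : (1 - s) * ((i : ℕ) / n) + s * ((i + 1 : ℕ) / n) = ((i : ℕ) + s) / n := by
      field_simp
      push_cast
      ring
    simp only [Fin.val_castSucc, Fin.val_succ]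
    rw [harg, hψ i (Nat.le_of_lt_succ i.isLt) s hs, hnode i (Nat.le_of_lt_succ i.isLt),
      hnode_succ i (Nat.le_of_lt_succ i.isLt), AffineMap.lineMap_apply_module]

end Polygon

namespace WeightedConfig

abbrev Config (ι V : Type*) := (ι → ℝ) × (ι → V)

variable {ι V : Type*}

theorem convex_setOf_eqOn_support [AddCommGroup V] [Module ℝ V] (p : Config ι V) :
    Convex ℝ {q : Config ι V | q.1 = p.1 ∧ ∀ k, p.1 k ≠ 0 → q.2 k = p.2 k} := by
  rintro q ⟨hq₁, hq₂⟩ r ⟨hr₁, hr₂⟩ a b - - hab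
  refine ⟨by simp [hq₁, hr₁, ← add_smul, hab], fun k hk => ?_⟩
  simp [hq₂ k hk, hr₂ k hk, ← add_smul, hab]

theorem swap_mul_swap_mul_swap_of_ne [DecidableEq ι] {a x y : ι} (hax : a ≠ x) (hay : a ≠ y) :
    Equiv.swap a x * Equiv.swap x y * Equiv.swap y a = Equiv.swap x y := by
  ext k
  simp only [Equiv.Perm.mul_apply, Equiv.swap_apply_def]
  split_ifs <;> simp_all

def permute (σ : Equiv.Perm ι) (p : Config ι V) : Config ι V := (p.1 ∘ σ, p.2 ∘ σ)

theorem permute_permute (σ τ : Equiv.Perm ι) (p : Config ι V) :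
    permute σ (permute τ p) = permute (τ * σ) p :=
  rfl

variable [Fintype ι]

def moment (g : V → ℝ) (p : Config ι V) : ℝ := ∑ k, p.1 k * g (p.2 k)

def momentClass (p₀ : Config ι V) : Set (Config ι V) :=
  {p | (∀ k, 0 ≤ p.1 k) ∧ ∀ g, moment g p = moment g p₀}

theorem self_mem_momentClass {p : Config ι V} (hp : ∀ k, 0 ≤ p.1 k) : p ∈ momentClass p :=
  ⟨hp, fun _ => rfl⟩

theorem moment_eq_of_eqOn_support {p q : Config ι V} (hw : q.1 = p.1)
    (hx : ∀ k, p.1 k ≠ 0 → q.2 k = p.2 k) (g : V → ℝ) : moment g q = moment g p := by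
  refine Finset.sum_congr rfl fun k _ => ?_
  rw [hw]
  by_cases hk : p.1 k = 0
  · simp [hk]
  · rw [hx k hk]

theorem moment_transfer [DecidableEq ι] (p : Config ι V) {a b : ι} (hab : a ≠ b)
    (hx : p.2 a = p.2 b) (g : V → ℝ) :
    moment g (update (update p.1 a (p.1 a + p.1 b)) b 0, p.2) = moment g p := by
  rw [← sub_eq_zero, moment, moment, ← Finset.sum_sub_distrib, Fintype.sum_eq_add a b hab]
  · simp [hab, hx]
    ring
  · rintro k ⟨hka, hkb⟩
    simp [hka, hkb]

theorem permute_mem_momentClass {p₀ p : Config ι V} (hp : p ∈ momentClass p₀)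
    (σ : Equiv.Perm ι) : permute σ p ∈ momentClass p₀ :=
  ⟨fun k => hp.1 (σ k), fun g => (Equiv.sum_comp σ fun k => p.1 k * g (p.2 k)).trans (hp.2 g)⟩

variable [AddCommGroup V] [Module ℝ V]

theorem convex_momentClass_inter_snd_eq (p₀ : Config ι V) (x : ι → V) :
    Convex ℝ (momentClass p₀ ∩ {p | p.2 = x}) := by
  rintro p ⟨⟨hp₀, hpg⟩, (hpx : p.2 = x)⟩ q ⟨⟨hq₀, hqg⟩, (hqx : q.2 = x)⟩ a b ha hb hab
  refine ⟨⟨fun k => ?_, fun g => ?_⟩, by simp [hpx, hqx, ← add_smul, hab]⟩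
  · simpa using add_nonneg (mul_nonneg ha (hp₀ k)) (mul_nonneg hb (hq₀ k))
  · have hmix : moment g (a • p + b • q) = a * moment g p + b * moment g q := by
      simp only [moment, Finset.mul_sum, ← Finset.sum_add_distrib]
      refine Finset.sum_congr rfl fun k _ => ?_
      simp [hpx, hqx, ← add_smul, hab]
      ring
    rw [hmix, hpg, hqg, ← add_mul, hab, one_mul]

theorem segment_update_snd_subset {p₀ p : Config ι V} [DecidableEq ι] (hp : p ∈ momentClass p₀)
    {a : ι} (ha : p.1 a = 0) (z : V) : segment ℝ p (p.1, update p.2 a z) ⊆ momentClass p₀ := by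
  have hsub : {q : Config ι V | q.1 = p.1 ∧ ∀ k, p.1 k ≠ 0 → q.2 k = p.2 k} ⊆ momentClass p₀ :=
    fun q ⟨hq₁, hq₂⟩ => ⟨hq₁ ▸ hp.1, fun g => (moment_eq_of_eqOn_support hq₁ hq₂ g).trans (hp.2 g)⟩
  refine .trans ((convex_setOf_eqOn_support p).segment_subset (y := (p.1, update p.2 a z))
    ⟨rfl, fun _ _ => rfl⟩ ⟨rfl, fun k hk => ?_⟩) hsub
  exact update_of_ne (by rintro rfl; exact hk ha) _ _

theorem segment_transfer_subset {p₀ p : Config ι V} [DecidableEq ι] (hp : p ∈ momentClass p₀)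
    {a b : ι} (hab : a ≠ b) (hx : p.2 a = p.2 b) :
    segment ℝ p (update (update p.1 a (p.1 a + p.1 b)) b 0, p.2) ⊆ momentClass p₀ := by
  have hq : (update (update p.1 a (p.1 a + p.1 b)) b 0, p.2) ∈ momentClass p₀ := by
    refine ⟨fun k => ?_, fun g => (moment_transfer p hab hx g).trans (hp.2 g)⟩
    simp only [update_apply]
    split_ifs
    exacts [le_rfl, add_nonneg (hp.1 a) (hp.1 b), hp.1 k]
  exact fun r hr => ((convex_momentClass_inter_snd_eq p₀ p.2).segment_subset ⟨hp, rfl⟩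
    ⟨hq, rfl⟩ hr).1

variable [DecidableEq ι]

theorem polygonallyJoinedIn_permute_swap_of_eq_zero {p₀ p : Config ι V}
    (hp : p ∈ momentClass p₀) {a : ι} (ha : p.1 a = 0) (j : ι) :
    PolygonallyJoinedIn (momentClass p₀) p (permute (Equiv.swap a j) p) := by
  rcases eq_or_ne a j with rfl | haj
  · rw [Equiv.swap_self]
    exact .refl
  obtain ⟨w, x⟩ := p
  dsimp only at ha
  -- move the weightless point `a` onto `x j`, transfer the weight of `j` to `a`,
  -- then move the now weightless point `j` onto `x a`
  have h₁ := segment_update_snd_subset hp ha (x j)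
  have h₂ := segment_transfer_subset (h₁ (right_mem_segment ℝ _ _)) haj (by simp [haj.symm])
  have h₃ := segment_update_snd_subset (h₂ (right_mem_segment ℝ _ _)) (a := j) (by simp) (x a)
  have hend : (update (update w a (w a + w j)) j 0, update (update x a (x j)) j (x a))
      = permute (Equiv.swap a j) (w, x) := by
    rw [permute, Equiv.comp_swap_eq_update, Equiv.comp_swap_eq_update, ha, zero_add,
      update_comm haj.symm, update_comm haj.symm (f := x)]
    dsimp only
    rw [ha]
  have h₁₂ : PolygonallyJoinedIn (momentClass p₀) _ _ := .tail (.single h₁) h₂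
  exact h₁₂.tail (hend ▸ h₃)

theorem polygonallyJoinedIn_permute_swap {p₀ p : Config ι V} (hp : p ∈ momentClass p₀) {a : ι}
    (ha : p.1 a = 0) (x y : ι) :
    PolygonallyJoinedIn (momentClass p₀) p (permute (Equiv.swap x y) p) := by
  rcases eq_or_ne a x with rfl | hax
  · exact polygonallyJoinedIn_permute_swap_of_eq_zero hp ha y
  rcases eq_or_ne a y with rfl | hay
  · rw [Equiv.swap_comm]
    exact polygonallyJoinedIn_permute_swap_of_eq_zero hp ha x
  -- three swaps with the weightless point, which travels from `a` to `x` to `y` and back to `a`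
  have h₁ := polygonallyJoinedIn_permute_swap_of_eq_zero hp ha x
  have hp₁ := permute_mem_momentClass hp (Equiv.swap a x)
  have h₂ := polygonallyJoinedIn_permute_swap_of_eq_zero hp₁ (a := x) (by simpa [permute]) y
  have hp₂ := permute_mem_momentClass hp₁ (Equiv.swap x y)
  have h₃ := polygonallyJoinedIn_permute_swap_of_eq_zero hp₂ (a := y) (by simpa [permute]) a
  have hend : permute (Equiv.swap y a) (permute (Equiv.swap x y) (permute (Equiv.swap a x) p))
      = permute (Equiv.swap x y) p := by
    rw [permute_permute, permute_permute, ← mul_assoc, swap_mul_swap_mul_swap_of_ne hax hay]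
  exact (h₁.trans h₂).trans (hend ▸ h₃)

theorem polygonallyJoinedIn_permute {p₀ p : Config ι V} (hp : p ∈ momentClass p₀) {a : ι}
    (ha : p.1 a = 0) (σ : Equiv.Perm ι) :
    PolygonallyJoinedIn (momentClass p₀) p (permute σ p) := by
  induction σ using Equiv.Perm.swap_induction_on' with
  | one => exact .refl
  | mul_swap σ x y _ ih =>
    rw [← permute_permute]
    exact ih.trans <| polygonallyJoinedIn_permute_swap (permute_mem_momentClass hp σ)
      (a := σ⁻¹ a) (by simpa [permute]) x y

end WeightedConfig

open WeightedConfig in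
theorem mcot_permutation_path_general (d M N K : ℕ)
    (c ϑ : (Fin M → Fin d → ℝ) → ℝ)
    (φ : Fin N → (Fin M → Fin d → ℝ) → ℝ) (μm : Fin N → ℝ)
    (A : ℝ)
    (U : Set ((Fin K → ℝ) × (Fin K → Fin M → Fin d → ℝ)))
    (hU : U = {p | (∀ k, 0 ≤ p.1 k) ∧ (∑ k, p.1 k = 1) ∧
      (∑ k, p.1 k * ϑ (p.2 k) ≤ A) ∧ ∀ n, ∑ k, p.1 k * φ n (p.2 k) = μm n})
    (I : ((Fin K → ℝ) × (Fin K → Fin M → Fin d → ℝ)) → ℝ)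
    (hI : I = fun p => ∑ k, p.1 k * c (p.2 k))
    (W : Fin K → ℝ) (Y : Fin K → Fin M → Fin d → ℝ)
    (hWY : (W, Y) ∈ U) (k' : Fin K) (hk' : W k' = 0)
    (σ : Equiv.Perm (Fin K)) :
    ∃ ψ : ℝ → (Fin K → ℝ) × (Fin K → Fin M → Fin d → ℝ),
      ContinuousOn ψ (Set.Icc 0 1) ∧
      ψ 0 = (W, Y) ∧ ψ 1 = (fun k => W (σ k), fun k => Y (σ k)) ∧
      (∀ t ∈ Set.Icc (0:ℝ) 1, ψ t ∈ U) ∧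
      (∃ (L : ℕ) (τ : Fin (L + 1) → ℝ), Monotone τ ∧ τ 0 = 0 ∧ τ (Fin.last L) = 1 ∧
        ∀ i : Fin L, ∀ s ∈ Set.Icc (0:ℝ) 1,
          ψ ((1 - s) * τ i.castSucc + s * τ i.succ)
            = (1 - s) • ψ (τ i.castSucc) + s • ψ (τ i.succ)) ∧
      (∀ t ∈ Set.Icc (0:ℝ) 1, I (ψ t) = I (W, Y)) := by
  subst hU hI
  obtain ⟨hW, hsum, hϑ, hφ⟩ := hWY
  have hself := self_mem_momentClass (p := (W, Y)) hW
  obtain ⟨ψ, hψ, hψ0, hψ1, hψS, hpoly⟩ :=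
    (polygonallyJoinedIn_permute hself (a := k') hk' σ).exists_polygonal_path hself
  refine ⟨ψ, hψ.continuousOn, hψ0, hψ1, fun t ht => ?_, hpoly, fun t ht => (hψS t ht).2 c⟩
  obtain ⟨hψW, hψmoment⟩ := hψS t ht
  refine ⟨hψW, ?_, (hψmoment ϑ).trans_le hϑ, fun n => (hψmoment (φ n)).trans (hφ n)⟩
  simpa [moment, hsum] using hψmoment 1

/-- Lemma 6.2 (permutation lemma): if `(W, Y) ∈ 𝒰_K^N` has a vanishing weight,
then for any permutation `σ` of `{1,…,K}` there is a continuous polygonal path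
in `𝒰_K^N` joining `(W, Y)` to `(W^σ, Y^σ)` along which the cost
`ℐ(W,Y) = Σ_k w_k c(X^k)` is constant. -/
theorem mcot_permutation_path (d M N K : ℕ)
    (c ϑ : (Fin M → Fin d → ℝ) → ℝ)
    (hc : ∀ X, 0 ≤ c X) (hϑ : ∀ X, 0 ≤ ϑ X)
    (φ : Fin N → (Fin M → Fin d → ℝ) → ℝ) (μm : Fin N → ℝ)
    (A : ℝ) (hA : 0 < A)
    (U : Set ((Fin K → ℝ) × (Fin K → Fin M → Fin d → ℝ)))
    (hU : U = {p | (∀ k, 0 ≤ p.1 k) ∧ (∑ k, p.1 k = 1) ∧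
      (∑ k, p.1 k * ϑ (p.2 k) ≤ A) ∧ ∀ n, ∑ k, p.1 k * φ n (p.2 k) = μm n})
    (I : ((Fin K → ℝ) × (Fin K → Fin M → Fin d → ℝ)) → ℝ)
    (hI : I = fun p => ∑ k, p.1 k * c (p.2 k))
    (W : Fin K → ℝ) (Y : Fin K → Fin M → Fin d → ℝ)
    (hWY : (W, Y) ∈ U) (k' : Fin K) (hk' : W k' = 0)
    (σ : Equiv.Perm (Fin K)) :
    ∃ ψ : ℝ → (Fin K → ℝ) × (Fin K → Fin M → Fin d → ℝ),
      ContinuousOn ψ (Set.Icc 0 1) ∧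
      ψ 0 = (W, Y) ∧ ψ 1 = (fun k => W (σ k), fun k => Y (σ k)) ∧
      (∀ t ∈ Set.Icc (0:ℝ) 1, ψ t ∈ U) ∧
      (∃ (L : ℕ) (τ : Fin (L + 1) → ℝ), Monotone τ ∧ τ 0 = 0 ∧ τ (Fin.last L) = 1 ∧
        ∀ i : Fin L, ∀ s ∈ Set.Icc (0:ℝ) 1,
          ψ ((1 - s) * τ i.castSucc + s * τ i.succ)
            = (1 - s) • ψ (τ i.castSucc) + s • ψ (τ i.succ)) ∧
      (∀ t ∈ Set.Icc (0:ℝ) 1, I (ψ t) = I (W, Y)) :=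
  mcot_permutation_path_general d M N K c ϑ φ μm A U hU I hI W Y hWY k' hk' σ
end
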